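/- Let φ: W → W′ be a weak isomorphism of cellular algebras. Then for every matrix R in W, tr(φ(R)) = tr(R). -/

import Mathlib

/-!
Since `J * (I ⊙ R) * J = tr R • J`, the trace of `R` can be read off from an expression built
with the three products only. A weak isomorphism fixes the identities `I` and `J` of the matrix
and Hadamard products, so it maps this expression to `tr (φ R) • J'`, and also to `tr R • J'`.
-/

open Matrix BigOperators
open scoped Classical

/-- The all-ones matrix `J`. -/
def matJ (V : Type*) : Matrix V V ℂ := Matrix.of fun _ _ => (1 : ℂ)

/-- A matrix with all entries in `{0,1}`. -/
def Is01 {V : Type*} (M : Matrix V V ℂ) : Prop := ∀ i j, M i j = 0 ∨ M i j = 1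

/-- A cellular algebra: a subalgebra of `Mat_V` closed under Hadamard multiplication and
conjugate transpose, containing `I` (automatic) and `J`. -/
def IsCellular {V : Type*} [Fintype V] [DecidableEq V]
    (W : Subalgebra ℂ (Matrix V V ℂ)) : Prop :=
  (∀ A B : Matrix V V ℂ, A ∈ W → B ∈ W → A ⊙ B ∈ W) ∧
  (∀ A : Matrix V V ℂ, A ∈ W → Aᴴ ∈ W) ∧
  matJ V ∈ W

/-- `B` is a vector-space basis of `W` consisting of 0-1 matrices. -/
def Is01Basis {V : Type*} [Fintype V] [DecidableEq V]
    (W : Subalgebra ℂ (Matrix V V ℂ)) (B : Finset (Matrix V V ℂ)) : Prop :=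
  (∀ R ∈ B, Is01 R) ∧
  LinearIndependent ℂ (fun x : {M : Matrix V V ℂ // M ∈ B} => x.val) ∧
  Submodule.span ℂ (B : Set (Matrix V V ℂ)) = Subalgebra.toSubmodule W

/-- The diagonal 0-1 indicator matrix `I_X` of a subset `X ⊆ V`. -/
def cellInd {V : Type*} [DecidableEq V] (X : Finset V) : Matrix V V ℂ :=
  Matrix.of fun i j => if i = j ∧ i ∈ X then (1 : ℂ) else 0

/-- A weak isomorphism of cellular algebras: a bijection `W → W'` preserving addition, scalar
multiplication, matrix multiplication, Hadamard multiplication and conjugate transpose. -/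
def IsWeakIso {V V' : Type*} [Fintype V] [DecidableEq V] [Fintype V'] [DecidableEq V']
    (W : Subalgebra ℂ (Matrix V V ℂ)) (W' : Subalgebra ℂ (Matrix V' V' ℂ))
    (φ : Matrix V V ℂ → Matrix V' V' ℂ) : Prop :=
  Set.BijOn φ (W : Set (Matrix V V ℂ)) (W' : Set (Matrix V' V' ℂ)) ∧
  (∀ A ∈ W, ∀ B ∈ W, φ (A + B) = φ A + φ B) ∧
  (∀ (c : ℂ), ∀ A ∈ W, φ (c • A) = c • φ A) ∧
  (∀ A ∈ W, ∀ B ∈ W, φ (A * B) = φ A * φ B) ∧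
  (∀ A ∈ W, ∀ B ∈ W, φ (A ⊙ B) = φ A ⊙ φ B) ∧
  (∀ A ∈ W, φ Aᴴ = (φ A)ᴴ)

lemma matJ_hadamard {V : Type*} (M : Matrix V V ℂ) : matJ V ⊙ M = M := by
  ext i j; simp [matJ, hadamard]

lemma hadamard_matJ {V : Type*} (M : Matrix V V ℂ) : M ⊙ matJ V = M := by
  ext i j; simp [matJ, hadamard]

lemma matJ_mul_one_hadamard_mul_matJ {V : Type*} [Fintype V] [DecidableEq V]
    (M : Matrix V V ℂ) : matJ V * ((1 : Matrix V V ℂ) ⊙ M) * matJ V = M.trace • matJ V := by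
  ext i j
  simp [matJ, mul_apply, hadamard, one_apply, trace, ite_mul]

lemma smul_matJ_inj {V : Type*} [Nonempty V] {a b : ℂ} (h : a • matJ V = b • matJ V) :
    a = b := by
  obtain ⟨i⟩ := ‹Nonempty V›
  simpa [matJ] using congrFun (congrFun h i) i

namespace IsWeakIso

variable {V V' : Type*} [Fintype V] [DecidableEq V] [Fintype V'] [DecidableEq V']
  {W : Subalgebra ℂ (Matrix V V ℂ)} {W' : Subalgebra ℂ (Matrix V' V' ℂ)}
  {φ : Matrix V V ℂ → Matrix V' V' ℂ} {A B : Matrix V V ℂ}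

lemma map_smul (hφ : IsWeakIso W W' φ) (c : ℂ) (hA : A ∈ W) : φ (c • A) = c • φ A :=
  hφ.2.2.1 c A hA

lemma map_mul (hφ : IsWeakIso W W' φ) (hA : A ∈ W) (hB : B ∈ W) : φ (A * B) = φ A * φ B :=
  hφ.2.2.2.1 A hA B hB

lemma map_hadamard (hφ : IsWeakIso W W' φ) (hA : A ∈ W) (hB : B ∈ W) :
    φ (A ⊙ B) = φ A ⊙ φ B :=
  hφ.2.2.2.2.1 A hA B hB

lemma map_matJ (hφ : IsWeakIso W W' φ) (hJ : matJ V ∈ W) (hJ' : matJ V' ∈ W') :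
    φ (matJ V) = matJ V' := by
  obtain ⟨B, hB, hφB⟩ := hφ.1.surjOn hJ'
  calc φ (matJ V) = φ (matJ V) ⊙ φ B := by rw [hφB, hadamard_matJ]
    _ = φ (matJ V ⊙ B) := (hφ.map_hadamard hJ hB).symm
    _ = matJ V' := by rw [matJ_hadamard, hφB]

lemma map_one (hφ : IsWeakIso W W' φ) : φ 1 = 1 := by
  obtain ⟨A, hA, hφA⟩ := hφ.1.surjOn W'.one_mem
  calc φ 1 = φ 1 * φ A := by rw [hφA, mul_one]
    _ = φ (1 * A) := (hφ.map_mul W.one_mem hA).symm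
    _ = 1 := by rw [one_mul, hφA]

lemma isEmpty_of_isEmpty (hφ : IsWeakIso W W' φ) [IsEmpty V'] : IsEmpty V := by
  have h10 : (1 : Matrix V V ℂ) = 0 :=
    hφ.1.injOn W.one_mem W.zero_mem (Subsingleton.elim _ _)
  exact ⟨fun i => by simpa using congrFun (congrFun h10 i) i⟩

end IsWeakIso

/-- weak isomorphisms preserve the trace. -/
theorem weakIso_trace {V V' : Type*} [Fintype V] [DecidableEq V] [Fintype V'] [DecidableEq V']
    (W : Subalgebra ℂ (Matrix V V ℂ)) (W' : Subalgebra ℂ (Matrix V' V' ℂ))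
    (hW : IsCellular W) (hW' : IsCellular W')
    (φ : Matrix V V ℂ → Matrix V' V' ℂ) (hφ : IsWeakIso W W' φ) :
    ∀ R ∈ W, (φ R).trace = R.trace := by
  intro R hR
  have hJ : matJ V ∈ W := hW.2.2
  have hφJ := hφ.map_matJ hJ hW'.2.2
  have hD : (1 : Matrix V V ℂ) ⊙ R ∈ W := hW.1 _ _ W.one_mem hR
  have h_trace_φR : φ (matJ V * ((1 : Matrix V V ℂ) ⊙ R) * matJ V) = (φ R).trace • matJ V' := by
    rw [hφ.map_mul (W.mul_mem hJ hD) hJ, hφ.map_mul hJ hD, hφ.map_hadamard W.one_mem hR,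
      hφ.map_one, hφJ, matJ_mul_one_hadamard_mul_matJ]
  have h_trace_R : φ (matJ V * ((1 : Matrix V V ℂ) ⊙ R) * matJ V) = R.trace • matJ V' := by
    rw [matJ_mul_one_hadamard_mul_matJ, hφ.map_smul _ hJ, hφJ]
  rcases isEmpty_or_nonempty V' with _ | _
  · have := hφ.isEmpty_of_isEmpty
    simp [trace]
  · exact smul_matJ_inj (h_trace_φR.symm.trans h_trace_R)
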